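/- Define a linear endomorphism S of NCSym on the basis of set partitions by S(A) := ∑_{γ ∈ Γ(r)} (−1)^{ℓ(γ)} γ[A], where r = ℓ(A) (and S(∅) = ∅). Then S is the antipode of NCSym: m∘(S⊗id)∘Δ = η∘ε = m∘(id⊗S)∘Δ, where m is the multiplication, Δ the comultiplication, ε the counit and η the unit of NCSym. -/

import Mathlib

open Finset

/-- `[n] = {1, …, n}` as a finset of naturals. -/
def seg (n : ℕ) : Finset ℕ := Finset.Icc 1 n

/-- A (raw) collection of blocks. -/
abbrev Blocks := Finset (Finset ℕ)

/-- The ground set (union of the blocks). -/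
def ground (A : Blocks) : Finset ℕ := A.sup id

/-- `A` is a set partition of the finite set `X`: nonempty pairwise disjoint blocks with union `X`. -/
def IsPartitionOf (A : Blocks) (X : Finset ℕ) : Prop :=
  (∀ B ∈ A, B.Nonempty) ∧ (A : Set (Finset ℕ)).PairwiseDisjoint id ∧ ground A = X

/-- `A` is a set partition of `[n]`. -/
def IsSP (A : Blocks) (n : ℕ) : Prop := IsPartitionOf A (seg n)

/-- The unique increasing bijection from `X` onto `[#X]`. -/
def stdFun (X : Finset ℕ) (x : ℕ) : ℕ := (X.filter (· < x)).card + 1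

/-- Standardization of a collection of blocks. -/
def stdP (A : Blocks) : Blocks := A.image fun B => B.image (stdFun (ground A))

/-- Shift all entries of all blocks up by `k`. -/
def shiftP (A : Blocks) (k : ℕ) : Blocks := A.image fun B => B.image (· + k)

/-- Concatenation `A | B` of set partitions: shift `B` up by the weight of `A`. -/
def concatP (A B : Blocks) : Blocks := A ∪ shiftP B (ground A).card

/-- The `i`-th block of `A` (1-based), where blocks are ordered by increasing minima. -/
def blockAt (A : Blocks) (i : ℕ) : Finset ℕ :=
  (A.filter fun B => (A.filter fun C => C.min ≤ B.min).card = i).sup id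

/-- `A_J` : the subcollection of blocks of `A` indexed by `J`. -/
def subColl (A : Blocks) (J : Finset ℕ) : Blocks := J.image (blockAt A)

/-- `A` is an atomic set partition of `[n]`. -/
def IsAtomicSP (A : Blocks) (n : ℕ) : Prop :=
  IsSP A n ∧ 1 ≤ n ∧
    ¬ ∃ m B C, 0 < m ∧ m < n ∧ IsSP B m ∧ IsSP C (n - m) ∧ A = concatP B C

/-- Raw set compositions: words whose letters are finsets of naturals. -/
abbrev SComp := List (Finset ℕ)

/-- The union of the letters of a word. -/
def sunion (γ : SComp) : Finset ℕ := γ.foldr (· ∪ ·) ∅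

/-- `γ` is a set composition of `K`. -/
def IsSCompOf (γ : SComp) (K : Finset ℕ) : Prop :=
  (∀ B ∈ γ, B.Nonempty) ∧ γ.Pairwise Disjoint ∧ sunion γ = K

/-- `γ[A] = std(A_{γ₁}) | std(A_{γ₂}) | ⋯ | std(A_{γₛ})`. -/
def applyComp (γ : SComp) (A : Blocks) : Blocks :=
  (γ.map fun g => stdP (subColl A g)).foldr concatP ∅

abbrev NCSym := Blocks →₀ ℚ

/-- The basis element of `NCSym` indexed by a set partition. -/
noncomputable def bas (A : Blocks) : NCSym := Finsupp.single A 1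

/-- `p(A) = ∑_{γ ∈ Γ'(r)} (-1)^{ℓ(γ)-1} γ[A]`. -/
noncomputable def pNC (A : Blocks) (r : ℕ) : NCSym :=
  ∑ᶠ γ ∈ {γ : SComp | IsSCompOf γ (seg r) ∧ 1 ∈ γ.headI},
    ((-1 : ℚ) ^ (γ.length - 1)) • bas (applyComp γ A)

open TensorProduct in
/-- `Δ(A) = ∑_{K ⊔ L = [r]} std(A_K) ⊗ std(A_L)` on a basis element. -/
noncomputable def deltaB (A : Blocks) : NCSym ⊗[ℚ] NCSym :=
  ∑ K ∈ (seg A.card).powerset,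
    bas (stdP (subColl A K)) ⊗ₜ[ℚ] bas (stdP (subColl A (seg A.card \ K)))

/-- The coproduct of `NCSym`, extended linearly. -/
noncomputable def Delta : NCSym →ₗ[ℚ] TensorProduct ℚ NCSym NCSym :=
  Finsupp.lsum ℚ fun A => LinearMap.toSpanSingleton ℚ _ (deltaB A)

/-- The antipode on a basis element: `S(A) = ∑_{γ ∈ Γ(r)} (-1)^{ℓ(γ)} γ[A]`, `r = ℓ(A)`. -/
noncomputable def SmapB (A : Blocks) : NCSym :=
  ∑ᶠ γ ∈ {γ : SComp | IsSCompOf γ (seg A.card)}, ((-1 : ℚ) ^ γ.length) • bas (applyComp γ A)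

/-- The candidate antipode of `NCSym`, extended linearly. -/
noncomputable def Smap : NCSym →ₗ[ℚ] NCSym :=
  Finsupp.lsum ℚ fun A => LinearMap.toSpanSingleton ℚ _ (SmapB A)

/-- The multiplication of `NCSym` as a bilinear map: `A ⋅ B = A|B` on basis elements. -/
noncomputable def mulLin : NCSym →ₗ[ℚ] NCSym →ₗ[ℚ] NCSym :=
  Finsupp.lsum ℚ fun A => LinearMap.toSpanSingleton ℚ _
    ((Finsupp.lsum ℚ fun B => LinearMap.toSpanSingleton ℚ _ (bas (concatP A B))) :
      NCSym →ₗ[ℚ] NCSym)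

/-- The multiplication of `NCSym` as a linear map on the tensor square. -/
noncomputable def mLin : TensorProduct ℚ NCSym NCSym →ₗ[ℚ] NCSym := TensorProduct.lift mulLin

/-- The unit of `NCSym`. -/
noncomputable def etaLin : ℚ →ₗ[ℚ] NCSym := LinearMap.toSpanSingleton ℚ _ (bas (∅ : Blocks))

/-- The counit of `NCSym`: `ε(∅) = 1` and `ε(A) = 0` for `A ≠ ∅`. -/
noncomputable def epsLin : NCSym →ₗ[ℚ] ℚ :=
  Finsupp.lsum ℚ fun A => if A = (∅ : Blocks) then LinearMap.id else 0

/-!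
Both identities come from a sign-reversing cancellation among set compositions. Taking a
sub-collection commutes with standardization, so `S(std(A_K)) = ∑_{γ ∈ Γ(K)} (-1)^{ℓ(γ)} γ[A]`,
and therefore `m ∘ (id ⊗ S) ∘ Δ (A) = ∑_{K ⊆ [r]} ∑_{δ ∈ Γ([r] \ K)} (-1)^{ℓ(δ)} (K, δ)[A]`
(for `S ⊗ id` the block `K` comes last instead). The summand `K = ∅` is `S(A)`, because an empty
letter contributes nothing to `γ[A]`, while the pairs `(K, δ)` with `K ≠ ∅` are exactly the
nonempty set compositions of `[r]`, each with the opposite sign. All that survives is the empty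
composition, which exists only when `r = 0`.
-/

lemma mem_seg {x n : ℕ} : x ∈ seg n ↔ 1 ≤ x ∧ x ≤ n := Finset.mem_Icc

lemma card_seg (n : ℕ) : (seg n).card = n := by simp [seg]

lemma seg_eq_empty_iff {n : ℕ} : seg n = ∅ ↔ n = 0 := by
  simp [seg, Finset.Icc_eq_empty_iff]

lemma seg_union_image_add (m p : ℕ) : seg m ∪ (seg p).image (· + m) = seg (m + p) := by
  ext x
  simp only [Finset.mem_union, mem_seg, Finset.mem_image]
  constructor
  · rintro (h | ⟨y, hy, rfl⟩) <;> omega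
  · intro hx
    by_cases hxm : x ≤ m
    · exact Or.inl ⟨hx.1, hxm⟩
    · exact Or.inr ⟨x - m, by omega, by omega⟩

section Ground

variable {A : Blocks} {B : Finset ℕ}

lemma subset_ground (hB : B ∈ A) : B ⊆ ground A := Finset.le_sup (f := id) hB

lemma ground_subset_ground {A' : Blocks} (h : A' ⊆ A) : ground A' ⊆ ground A :=
  Finset.sup_mono h

lemma ground_empty : ground (∅ : Blocks) = ∅ := rfl

lemma ground_union (A A' : Blocks) : ground (A ∪ A') = ground A ∪ ground A' := Finset.sup_union

def mapB (f : ℕ → ℕ) (A : Blocks) : Blocks := A.image fun B => B.image f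

lemma ground_mapB (f : ℕ → ℕ) (A : Blocks) : ground (mapB f A) = (ground A).image f := by
  ext x
  simp only [ground, mapB, Finset.mem_sup, Finset.mem_image, id]
  aesop

end Ground

def IsPartition (A : Blocks) : Prop := IsPartitionOf A (ground A)

lemma IsSP.isPartition {A : Blocks} {n : ℕ} (h : IsSP A n) : IsPartition A :=
  ⟨h.1, h.2.1, rfl⟩

section StdFun

variable {X : Finset ℕ} {x : ℕ}

lemma stdFun_strictMonoOn (X : Finset ℕ) : StrictMonoOn (stdFun X) X := by
  intro x hx y _ hxy
  have hss : X.filter (· < x) ⊂ X.filter (· < y) := by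
    rw [Finset.ssubset_iff_of_subset
      (Finset.monotone_filter_right X fun z _ hz => lt_trans hz hxy)]
    exact ⟨x, Finset.mem_filter.2 ⟨hx, hxy⟩, by simp⟩
  simpa [stdFun] using Finset.card_lt_card hss

lemma stdFun_mem_seg (hx : x ∈ X) : stdFun X x ∈ seg X.card := by
  have : (X.filter (· < x)).card < X.card :=
    Finset.card_lt_card (Finset.filter_ssubset.2 ⟨x, hx, lt_irrefl x⟩)
  rw [mem_seg, stdFun]
  omega

lemma image_stdFun (X : Finset ℕ) : X.image (stdFun X) = seg X.card := by
  refine Finset.eq_of_subset_of_card_le ?_ ?_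
  · simpa [Finset.image_subset_iff] using fun x hx => stdFun_mem_seg hx
  · rw [card_seg, Finset.card_image_of_injOn (stdFun_strictMonoOn X).injOn]

lemma stdFun_image {f : ℕ → ℕ} (hf : StrictMonoOn f X) (hx : x ∈ X) :
    stdFun (X.image f) (f x) = stdFun X x := by
  have hfilter : (X.image f).filter (· < f x) = (X.filter (· < x)).image f := by
    ext z
    simp only [Finset.mem_filter, Finset.mem_image]
    constructor
    · rintro ⟨⟨y, hy, rfl⟩, hlt⟩
      exact ⟨y, ⟨hy, (hf.lt_iff_lt hy hx).1 hlt⟩, rfl⟩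
    · rintro ⟨y, ⟨hy, hlt⟩, rfl⟩
      exact ⟨⟨y, hy, rfl⟩, hf hy hx hlt⟩
  rw [stdFun, stdFun, hfilter,
    Finset.card_image_of_injOn (hf.injOn.mono (Finset.coe_subset.2 (Finset.filter_subset _ _)))]

end StdFun

def blockRank (A : Blocks) (B : Finset ℕ) : ℕ := (A.filter fun C => C.min ≤ B.min).card

lemma blockRank_lt_blockRank {A : Blocks} {B C : Finset ℕ} (hC : C ∈ A)
    (hmin : B.min < C.min) :
    blockRank A B < blockRank A C := by
  refine Finset.card_lt_card ((Finset.ssubset_iff_of_subset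
    (Finset.monotone_filter_right A fun D _ hD => hD.trans hmin.le)).2 ⟨C, ?_, ?_⟩)
  · exact Finset.mem_filter.2 ⟨hC, le_rfl⟩
  · exact fun hC' => (Finset.mem_filter.1 hC').2.not_gt hmin

namespace IsPartition

variable {A : Blocks} {B C : Finset ℕ} {i j : ℕ}

lemma eq_of_min_eq (h : IsPartition A) (hB : B ∈ A) (hC : C ∈ A) (hmin : B.min = C.min) :
    B = C := by
  obtain ⟨a, ha⟩ := Finset.min_of_nonempty (h.1 B hB)
  by_contra hne
  exact Finset.disjoint_left.1 (h.2.1 hB hC hne) (Finset.mem_of_min ha)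
    (Finset.mem_of_min (hmin ▸ ha))

lemma min_le_min_iff (h : IsPartition A) (hB : B ∈ A) (hC : C ∈ A) :
    B.min ≤ C.min ↔ blockRank A B ≤ blockRank A C := by
  constructor
  · intro hm
    rcases hm.eq_or_lt with hm | hm
    · rw [h.eq_of_min_eq hB hC hm]
    · exact (blockRank_lt_blockRank hC hm).le
  · intro hr
    by_contra hm
    exact (blockRank_lt_blockRank hB (not_le.1 hm)).not_ge hr

lemma blockRank_injOn (h : IsPartition A) : Set.InjOn (blockRank A) A := by
  intro D hD E hE hrk
  exact h.eq_of_min_eq hD hE (le_antisymm ((h.min_le_min_iff hD hE).2 hrk.le)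
    ((h.min_le_min_iff hE hD).2 hrk.ge))

lemma image_blockRank (h : IsPartition A) : A.image (blockRank A) = seg A.card := by
  refine Finset.eq_of_subset_of_card_le ?_ ?_
  · intro i hi
    obtain ⟨B, hB, rfl⟩ := Finset.mem_image.1 hi
    refine mem_seg.2 ⟨Finset.card_pos.2 ⟨B, Finset.mem_filter.2 ⟨hB, le_rfl⟩⟩, ?_⟩
    exact Finset.card_le_card (Finset.filter_subset _ _)
  · rw [card_seg, Finset.card_image_of_injOn h.blockRank_injOn]

lemma blockAt_blockRank (h : IsPartition A) (hB : B ∈ A) : blockAt A (blockRank A B) = B := by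
  have hfilter : (A.filter fun C => blockRank A C = blockRank A B) = {B} := by
    ext C
    simp only [Finset.mem_filter, Finset.mem_singleton]
    exact ⟨fun hC => h.blockRank_injOn hC.1 hB hC.2, by rintro rfl; exact ⟨hB, rfl⟩⟩
  exact (congrArg (Finset.sup · id) hfilter).trans Finset.sup_singleton

lemma exists_blockRank_eq (h : IsPartition A) (hi : i ∈ seg A.card) :
    ∃ B ∈ A, blockRank A B = i :=
  Finset.mem_image.1 (h.image_blockRank ▸ hi)

lemma blockAt_mem (h : IsPartition A) (hi : i ∈ seg A.card) : blockAt A i ∈ A := by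
  obtain ⟨B, hB, rfl⟩ := h.exists_blockRank_eq hi
  rwa [h.blockAt_blockRank hB]

lemma blockRank_blockAt (h : IsPartition A) (hi : i ∈ seg A.card) :
    blockRank A (blockAt A i) = i := by
  obtain ⟨B, hB, rfl⟩ := h.exists_blockRank_eq hi
  rw [h.blockAt_blockRank hB]

lemma blockAt_injOn (h : IsPartition A) : Set.InjOn (blockAt A) (seg A.card) := by
  intro i hi j hj hij
  rw [← h.blockRank_blockAt hi, ← h.blockRank_blockAt hj, hij]

lemma min_blockAt_le_iff (h : IsPartition A) (hi : i ∈ seg A.card) (hj : j ∈ seg A.card) :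
    (blockAt A i).min ≤ (blockAt A j).min ↔ i ≤ j := by
  rw [h.min_le_min_iff (h.blockAt_mem hi) (h.blockAt_mem hj), h.blockRank_blockAt hi,
    h.blockRank_blockAt hj]

end IsPartition

lemma disjoint_image_of_injOn {f : ℕ → ℕ} {s t u : Finset ℕ} (hf : Set.InjOn f u)
    (hs : s ⊆ u) (ht : t ⊆ u) (h : Disjoint s t) : Disjoint (s.image f) (t.image f) := by
  rw [← Finset.disjoint_coe, Finset.coe_image, Finset.coe_image]
  exact (Finset.disjoint_coe.2 h).image hf (Finset.coe_subset.2 hs) (Finset.coe_subset.2 ht)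

section SubColl

variable {A : Blocks} {K : Finset ℕ}

lemma subColl_empty (A : Blocks) : subColl A ∅ = ∅ := Finset.image_empty _

lemma subColl_subset (h : IsPartition A) (hK : K ⊆ seg A.card) : subColl A K ⊆ A := by
  simpa [subColl, Finset.image_subset_iff] using fun j hj => h.blockAt_mem (hK hj)

lemma IsPartition.subColl (h : IsPartition A) (hK : K ⊆ seg A.card) :
    IsPartition (subColl A K) :=
  ⟨fun B hB => h.1 B (subColl_subset h hK hB),
    h.2.1.subset (Finset.coe_subset.2 (subColl_subset h hK)), rfl⟩

lemma card_subColl (h : IsPartition A) (hK : K ⊆ seg A.card) : (subColl A K).card = K.card :=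
  Finset.card_image_of_injOn (h.blockAt_injOn.mono (Finset.coe_subset.2 hK))

lemma blockRank_subColl (h : IsPartition A) (hK : K ⊆ seg A.card) {j : ℕ} (hj : j ∈ K) :
    blockRank (subColl A K) (blockAt A j) = stdFun K j := by
  have hfilter : (subColl A K).filter (fun C => C.min ≤ (blockAt A j).min)
      = (K.filter (· ≤ j)).image (blockAt A) := by
    ext C
    simp only [subColl, Finset.mem_filter, Finset.mem_image]
    constructor
    · rintro ⟨⟨i, hi, rfl⟩, hmin⟩
      exact ⟨i, ⟨hi, (h.min_blockAt_le_iff (hK hi) (hK hj)).1 hmin⟩, rfl⟩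
    · rintro ⟨i, ⟨hi, hij⟩, rfl⟩
      exact ⟨⟨i, hi, rfl⟩, (h.min_blockAt_le_iff (hK hi) (hK hj)).2 hij⟩
  have hle : K.filter (· ≤ j) = insert j (K.filter (· < j)) := by
    ext i
    simp only [Finset.mem_filter, Finset.mem_insert]
    constructor
    · rintro ⟨hi, hij⟩
      exact hij.eq_or_lt.imp id fun hlt => ⟨hi, hlt⟩
    · rintro (rfl | ⟨hi, hij⟩)
      exacts [⟨hj, le_rfl⟩, ⟨hi, hij.le⟩]
  rw [blockRank, hfilter, Finset.card_image_of_injOn (h.blockAt_injOn.mono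
      (Finset.coe_subset.2 ((Finset.filter_subset _ _).trans hK))), hle,
    Finset.card_insert_of_notMem (by simp), stdFun]

lemma blockAt_subColl (h : IsPartition A) (hK : K ⊆ seg A.card) {j : ℕ} (hj : j ∈ K) :
    blockAt (subColl A K) (stdFun K j) = blockAt A j := by
  rw [← blockRank_subColl h hK hj,
    (h.subColl hK).blockAt_blockRank
      (Finset.mem_image_of_mem _ hj : blockAt A j ∈ subColl A K)]

end SubColl

section MapB

variable {A : Blocks} {f : ℕ → ℕ} {B C : Finset ℕ}

lemma min'_image {X : Finset ℕ} (hf : StrictMonoOn f X) (hB : B ⊆ X) (hne : B.Nonempty) :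
    (B.image f).min' (hne.image f) = f (B.min' hne) := by
  refine le_antisymm (Finset.min'_le _ _ (Finset.mem_image_of_mem f (Finset.min'_mem B hne))) ?_
  simp only [Finset.le_min'_iff, Finset.mem_image, forall_exists_index, and_imp]
  rintro _ b hb rfl
  exact (hf.le_iff_le (hB (Finset.min'_mem B hne)) (hB hb)).2 (Finset.min'_le B b hb)

lemma min_image_le_min_image_iff {X : Finset ℕ} (hf : StrictMonoOn f X) (hB : B ⊆ X)
    (hC : C ⊆ X) (hBne : B.Nonempty) (hCne : C.Nonempty) :
    (B.image f).min ≤ (C.image f).min ↔ B.min ≤ C.min := by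
  rw [← Finset.coe_min' hBne, ← Finset.coe_min' hCne, ← Finset.coe_min' (hBne.image f),
    ← Finset.coe_min' (hCne.image f), min'_image hf hB hBne, min'_image hf hC hCne,
    WithTop.coe_le_coe, WithTop.coe_le_coe]
  exact hf.le_iff_le (hB (Finset.min'_mem B hBne)) (hC (Finset.min'_mem C hCne))

lemma injOn_image_of_isPartition (h : IsPartition A) (hf : StrictMonoOn f (ground A)) :
    Set.InjOn (fun B : Finset ℕ => B.image f) A := by
  intro B hB C hC heq
  by_contra hne
  have hd := disjoint_image_of_injOn hf.injOn (subset_ground hB) (subset_ground hC)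
    (h.2.1 hB hC hne)
  rw [show B.image f = C.image f from heq, disjoint_self_iff_empty, Finset.image_eq_empty] at hd
  exact (h.1 C hC).ne_empty hd

lemma IsPartition.mapB (h : IsPartition A) (hf : StrictMonoOn f (ground A)) :
    IsPartition (mapB f A) := by
  refine ⟨?_, ?_, rfl⟩
  · simp only [_root_.mapB, Finset.mem_image, forall_exists_index, and_imp]
    rintro _ B hB rfl
    exact (h.1 B hB).image f
  · simp only [_root_.mapB, Finset.coe_image]
    rintro _ ⟨B, hB, rfl⟩ _ ⟨C, hC, rfl⟩ hne
    exact disjoint_image_of_injOn hf.injOn (subset_ground hB) (subset_ground hC)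
      (h.2.1 hB hC fun hBC => hne (by rw [hBC]))

lemma card_mapB (h : IsPartition A) (hf : StrictMonoOn f (ground A)) :
    (mapB f A).card = A.card :=
  Finset.card_image_of_injOn (injOn_image_of_isPartition h hf)

lemma blockRank_mapB (h : IsPartition A) (hf : StrictMonoOn f (ground A)) (hB : B ∈ A) :
    blockRank (mapB f A) (B.image f) = blockRank A B := by
  have hfilter : (mapB f A).filter (fun C' => C'.min ≤ (B.image f).min)
      = (A.filter fun C => C.min ≤ B.min).image (fun C => C.image f) := by
    ext C'
    simp only [mapB, Finset.mem_filter, Finset.mem_image]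
    constructor
    · rintro ⟨⟨C, hC, rfl⟩, hmin⟩
      refine ⟨C, ⟨hC, ?_⟩, rfl⟩
      exact (min_image_le_min_image_iff hf (subset_ground hC) (subset_ground hB)
        (h.1 C hC) (h.1 B hB)).1 hmin
    · rintro ⟨C, ⟨hC, hmin⟩, rfl⟩
      exact ⟨⟨C, hC, rfl⟩, (min_image_le_min_image_iff hf (subset_ground hC)
        (subset_ground hB) (h.1 C hC) (h.1 B hB)).2 hmin⟩
  rw [blockRank, hfilter, Finset.card_image_of_injOn
    ((injOn_image_of_isPartition h hf).mono (Finset.coe_subset.2 (Finset.filter_subset _ _))),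
    blockRank]

lemma blockAt_mapB (h : IsPartition A) (hf : StrictMonoOn f (ground A)) {i : ℕ}
    (hi : i ∈ seg A.card) : blockAt (mapB f A) i = (blockAt A i).image f := by
  conv_lhs => rw [← h.blockRank_blockAt hi, ← blockRank_mapB h hf (h.blockAt_mem hi)]
  exact (h.mapB hf).blockAt_blockRank (Finset.mem_image_of_mem _ (h.blockAt_mem hi))

lemma stdP_eq_mapB (A : Blocks) : stdP A = mapB (stdFun (ground A)) A := rfl

lemma stdP_mapB (hf : StrictMonoOn f (ground A)) : stdP (mapB f A) = stdP A := by
  rw [stdP_eq_mapB, stdP_eq_mapB, ground_mapB]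
  simp only [mapB, Finset.image_image]
  refine Finset.image_congr fun B hB => ?_
  simp only [Function.comp_apply, Finset.image_image]
  exact Finset.image_congr fun b hb => stdFun_image hf (subset_ground hB hb)

lemma stdP_empty : stdP (∅ : Blocks) = ∅ := Finset.image_empty _

lemma ground_stdP (A : Blocks) : ground (stdP A) = seg (ground A).card := by
  rw [stdP_eq_mapB, ground_mapB, image_stdFun]

lemma card_stdP (h : IsPartition A) : (stdP A).card = A.card :=
  card_mapB h (stdFun_strictMonoOn _)

lemma blockAt_stdP (h : IsPartition A) {i : ℕ} (hi : i ∈ seg A.card) :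
    blockAt (stdP A) i = (blockAt A i).image (stdFun (ground A)) :=
  blockAt_mapB h (stdFun_strictMonoOn _) hi

end MapB

section Concat

variable {a b : Blocks} {m p : ℕ}

lemma shiftP_union (A A' : Blocks) (k : ℕ) : shiftP (A ∪ A') k = shiftP A k ∪ shiftP A' k :=
  Finset.image_union _ _

lemma shiftP_shiftP (A : Blocks) (k l : ℕ) : shiftP (shiftP A k) l = shiftP A (k + l) := by
  simp [shiftP, Finset.image_image, Function.comp_def, add_assoc]

lemma concatP_empty (A : Blocks) : concatP A ∅ = A := by
  simp [concatP, shiftP]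

lemma empty_concatP (A : Blocks) : concatP ∅ A = A := by
  simp [concatP, shiftP, ground_empty]

lemma ground_concatP (ha : ground a = seg m) (hb : ground b = seg p) :
    ground (concatP a b) = seg (m + p) := by
  rw [concatP, ground_union, shiftP, ← mapB, ground_mapB, ha, hb, card_seg, seg_union_image_add]

lemma concatP_assoc (ha : ground a = seg m) (hb : ground b = seg p) (c : Blocks) :
    concatP (concatP a b) c = concatP a (concatP b c) := by
  have hab := ground_concatP ha hb
  unfold concatP at hab ⊢
  rw [hab, ha, hb, card_seg, card_seg, card_seg, shiftP_union, shiftP_shiftP, Finset.union_assoc,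
    add_comm p m]

end Concat

section ApplyComp

lemma applyComp_nil (A : Blocks) : applyComp [] A = ∅ := rfl

lemma applyComp_cons (g : Finset ℕ) (γ : SComp) (A : Blocks) :
    applyComp (g :: γ) A = concatP (stdP (subColl A g)) (applyComp γ A) := rfl

lemma exists_ground_applyComp_eq_seg (γ : SComp) (A : Blocks) :
    ∃ m, ground (applyComp γ A) = seg m := by
  induction γ with
  | nil => exact ⟨0, by simp [applyComp_nil, ground_empty, seg]⟩
  | cons g γ ih =>
    obtain ⟨m, hm⟩ := ih
    exact ⟨_, ground_concatP (ground_stdP _) hm⟩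

lemma applyComp_append (γ δ : SComp) (A : Blocks) :
    applyComp (γ ++ δ) A = concatP (applyComp γ A) (applyComp δ A) := by
  induction γ with
  | nil => exact (empty_concatP _).symm
  | cons g γ ih =>
    obtain ⟨m, hm⟩ := exists_ground_applyComp_eq_seg γ A
    rw [List.cons_append, applyComp_cons, applyComp_cons, ih, concatP_assoc (ground_stdP _) hm]

lemma applyComp_singleton (g : Finset ℕ) (A : Blocks) : applyComp [g] A = stdP (subColl A g) :=
  concatP_empty _

lemma applyComp_empty_cons (δ : SComp) (A : Blocks) :
    applyComp (∅ :: δ) A = applyComp δ A := by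
  rw [applyComp_cons, subColl_empty, stdP_empty, empty_concatP]

lemma applyComp_append_empty (δ : SComp) (A : Blocks) :
    applyComp (δ ++ [∅]) A = applyComp δ A := by
  rw [applyComp_append, applyComp_singleton, subColl_empty, stdP_empty, concatP_empty]

end ApplyComp

section SetCompositions

variable {γ : SComp} {g S : Finset ℕ}

lemma sunion_cons (g : Finset ℕ) (γ : SComp) : sunion (g :: γ) = g ∪ sunion γ := rfl

lemma mem_sunion {x : ℕ} : x ∈ sunion γ ↔ ∃ B ∈ γ, x ∈ B := by
  induction γ with
  | nil => simp [sunion]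
  | cons B γ ih => simp [sunion_cons, ih]

lemma disjoint_sunion_iff : Disjoint g (sunion γ) ↔ ∀ B ∈ γ, Disjoint g B := by
  simp only [Finset.disjoint_left, mem_sunion, not_exists, not_and]
  exact ⟨fun h B hB x hx => h hx B hB, fun h x hx B hB => h B hB hx⟩

lemma IsSCompOf.subset (h : IsSCompOf γ S) (hg : g ∈ γ) : g ⊆ S :=
  h.2.2 ▸ fun _ hx => mem_sunion.2 ⟨g, hg, hx⟩

lemma isSCompOf_nil_iff : IsSCompOf [] S ↔ S = ∅ := by
  simp [IsSCompOf, sunion, eq_comm]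

lemma isSCompOf_cons_iff :
    IsSCompOf (g :: γ) S ↔ g.Nonempty ∧ g ⊆ S ∧ IsSCompOf γ (S \ g) := by
  simp only [IsSCompOf, List.forall_mem_cons, List.pairwise_cons, sunion_cons,
    ← disjoint_sunion_iff]
  constructor
  · rintro ⟨⟨hg, hγ⟩, ⟨hdisj, hpw⟩, rfl⟩
    exact ⟨hg, Finset.subset_union_left, hγ, hpw, (Finset.union_sdiff_cancel_left hdisj).symm⟩
  · rintro ⟨hg, hgS, hγ, hpw, hS⟩
    refine ⟨⟨hg, hγ⟩, ⟨hS ▸ Finset.disjoint_sdiff, hpw⟩, ?_⟩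
    rw [hS, Finset.union_sdiff_of_subset hgS]

lemma isSCompOf_reverse_iff : IsSCompOf γ.reverse S ↔ IsSCompOf γ S := by
  have hunion : sunion γ.reverse = sunion γ := by
    ext
    simp [mem_sunion]
  simp only [IsSCompOf, List.mem_reverse, List.pairwise_reverse, hunion, disjoint_comm]

lemma IsSCompOf.nodup (h : IsSCompOf γ S) : γ.Nodup := by
  refine h.2.1.imp_of_mem fun ha _ hab heq => ?_
  subst heq
  exact (h.1 _ ha).ne_empty (disjoint_self_iff_empty _ |>.1 hab)

lemma finite_setOf_isSCompOf (S : Finset ℕ) : {γ | IsSCompOf γ S}.Finite := by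
  refine (List.finite_toSet (S.powerset.toList.sublists.flatMap List.permutations)).subset
    fun γ hγ => ?_
  obtain ⟨l, hperm, hsub⟩ := hγ.nodup.subperm (l₂ := S.powerset.toList)
    fun g hg => Finset.mem_toList.2 (Finset.mem_powerset.2 (hγ.subset hg))
  simp only [List.mem_flatMap, List.mem_sublists, List.mem_permutations]
  exact ⟨l, hsub, hperm.symm⟩

noncomputable def setCompositions (S : Finset ℕ) : Finset SComp :=
  (finite_setOf_isSCompOf S).toFinset

lemma mem_setCompositions : γ ∈ setCompositions S ↔ IsSCompOf γ S :=
  Set.Finite.mem_toFinset _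

lemma nil_mem_setCompositions_iff : [] ∈ setCompositions S ↔ S = ∅ := by
  rw [mem_setCompositions, isSCompOf_nil_iff]

variable {M : Type*} [AddCommMonoid M]

lemma sum_setCompositions_reverse (S : Finset ℕ) (F : SComp → M) :
    ∑ γ ∈ setCompositions S, F γ.reverse = ∑ γ ∈ setCompositions S, F γ :=
  Finset.sum_nbij' List.reverse List.reverse
    (by simp [mem_setCompositions, isSCompOf_reverse_iff])
    (by simp [mem_setCompositions, isSCompOf_reverse_iff])
    (by simp) (by simp) fun _ _ => rfl

lemma sum_erase_nil_setCompositions (S : Finset ℕ) (F : SComp → M) :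
    ∑ γ ∈ (setCompositions S).erase [], F γ =
      ∑ K ∈ S.powerset.erase ∅, ∑ δ ∈ setCompositions (S \ K), F (K :: δ) := by
  rw [Finset.sum_sigma']
  refine Finset.sum_nbij' (fun γ => ⟨γ.headI, γ.tail⟩) (fun p => p.1 :: p.2) ?_ ?_ ?_ ?_ ?_
  · rintro (_ | ⟨g, δ⟩) hγ
    · simp at hγ
    · simp only [Finset.mem_erase, mem_setCompositions, isSCompOf_cons_iff] at hγ
      simp only [Finset.mem_sigma, Finset.mem_erase, Finset.mem_powerset, mem_setCompositions,
        List.headI_cons, List.tail_cons]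
      exact ⟨⟨hγ.2.1.ne_empty, hγ.2.2.1⟩, hγ.2.2.2⟩
  · rintro ⟨K, δ⟩ hp
    simp only [Finset.mem_sigma, Finset.mem_erase, Finset.mem_powerset,
      mem_setCompositions] at hp
    simp only [Finset.mem_erase, mem_setCompositions, isSCompOf_cons_iff]
    exact ⟨List.cons_ne_nil _ _, Finset.nonempty_iff_ne_empty.2 hp.1.1, hp.1.2, hp.2⟩
  · rintro (_ | ⟨g, δ⟩) hγ
    · simp at hγ
    · rfl
  · rintro ⟨K, δ⟩ _
    rfl
  · rintro (_ | ⟨g, δ⟩) hγ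
    · simp at hγ
    · rfl

end SetCompositions

section AlternatingSums

variable {R M : Type*} [Ring R] [AddCommGroup M] [Module R M]

theorem sum_powerset_sum_cons_setCompositions (S : Finset ℕ) (F : SComp → M)
    (hF : ∀ δ, F (∅ :: δ) = F δ) :
    ∑ K ∈ S.powerset, ∑ δ ∈ setCompositions (S \ K), (-1 : R) ^ δ.length • F (K :: δ) =
      if S = ∅ then F [] else 0 := by
  have hlead : ∑ δ ∈ setCompositions (S \ ∅), (-1 : R) ^ δ.length • F (∅ :: δ) =
      ∑ γ ∈ setCompositions S, (-1 : R) ^ γ.length • F γ := by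
    simp only [Finset.sdiff_empty, hF]
  have htail : ∑ K ∈ S.powerset.erase ∅, ∑ δ ∈ setCompositions (S \ K),
      (-1 : R) ^ δ.length • F (K :: δ) =
      -∑ γ ∈ (setCompositions S).erase [], (-1 : R) ^ γ.length • F γ := by
    simp only [sum_erase_nil_setCompositions, List.length_cons, pow_succ, mul_neg_one, neg_smul,
      Finset.sum_neg_distrib, neg_neg]
  rw [← Finset.add_sum_erase _ _ (Finset.empty_mem_powerset S), hlead, htail, ← sub_eq_add_neg]
  split_ifs with hS
  · simp [Finset.sum_erase_eq_sub (nil_mem_setCompositions_iff.2 hS)]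
  · rw [Finset.erase_eq_of_notMem (mt nil_mem_setCompositions_iff.1 hS), sub_self]

theorem sum_powerset_sum_setCompositions_append (S : Finset ℕ) (F : SComp → M)
    (hF : ∀ δ, F (δ ++ [∅]) = F δ) :
    ∑ K ∈ S.powerset, ∑ δ ∈ setCompositions K, (-1 : R) ^ δ.length • F (δ ++ [S \ K]) =
      if S = ∅ then F [] else 0 := by
  -- reversing compositions turns the last letter into the first
  have hrev := sum_powerset_sum_cons_setCompositions (R := R) S (F ∘ List.reverse)
    (by simp [hF])
  simp only [Function.comp_apply, List.reverse_cons, List.reverse_nil] at hrev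
  rw [← hrev]
  have hcompl : ∀ K ∈ S.powerset, S \ (S \ K) = K :=
    fun K hK => Finset.sdiff_sdiff_eq_self (Finset.mem_powerset.1 hK)
  refine Finset.sum_nbij' (S \ ·) (S \ ·) (by simp) (by simp) hcompl hcompl fun K hK => ?_
  rw [hcompl K hK]
  simpa using (sum_setCompositions_reverse K
    fun δ => (-1 : R) ^ δ.length • F (δ ++ [S \ K])).symm

end AlternatingSums

section Relabel

variable {A : Blocks} {K S : Finset ℕ} {γ : SComp} {φ : ℕ → ℕ}

lemma IsSCompOf.map_image (hφ : Set.InjOn φ S) (h : IsSCompOf γ S) :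
    IsSCompOf (γ.map (·.image φ)) (S.image φ) := by
  refine ⟨?_, ?_, ?_⟩
  · simp only [List.mem_map]
    rintro _ ⟨g, hg, rfl⟩
    exact (h.1 g hg).image φ
  · rw [List.pairwise_map]
    exact h.2.1.imp_of_mem fun ha hb hab =>
      disjoint_image_of_injOn hφ (h.subset ha) (h.subset hb) hab
  · rw [← h.2.2]
    ext
    simp only [mem_sunion, List.mem_map, Finset.mem_image]
    aesop

lemma IsSCompOf.map_image_map_image {ψ : ℕ → ℕ} (hψφ : Set.LeftInvOn ψ φ S)
    (h : IsSCompOf γ S) : (γ.map (·.image φ)).map (·.image ψ) = γ := by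
  rw [List.map_map]
  refine (List.map_congr_left fun g hg => ?_).trans (List.map_id γ)
  simp only [Function.comp_apply, Finset.image_image, id]
  exact (Finset.image_congr fun x hx => hψφ (h.subset hg hx)).trans Finset.image_id

lemma sum_setCompositions_image {M : Type*} [AddCommMonoid M] (hφ : Set.InjOn φ S)
    (F : SComp → M) :
    ∑ γ ∈ setCompositions (S.image φ), F γ =
      ∑ γ ∈ setCompositions S, F (γ.map (·.image φ)) := by
  set ψ := Function.invFunOn φ S
  have hψφ : Set.LeftInvOn ψ φ S := hφ.leftInvOn_invFunOn
  have hφψ : Set.LeftInvOn φ ψ (S.image φ) := by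
    rw [Finset.coe_image]
    exact (Set.surjOn_image φ S).rightInvOn_invFunOn
  have hSψ : (S.image φ).image ψ = S := by
    rw [Finset.image_image]
    exact (Finset.image_congr fun x hx => hψφ hx).trans Finset.image_id
  symm
  refine Finset.sum_nbij' (·.map (·.image φ)) (·.map (·.image ψ)) ?_ ?_ ?_ ?_ fun _ _ => rfl
  · exact fun γ hγ => mem_setCompositions.2 ((mem_setCompositions.1 hγ).map_image hφ)
  · intro δ hδ
    rw [mem_setCompositions, ← hSψ]
    exact (mem_setCompositions.1 hδ).map_image hφψ.injOn
  · exact fun γ hγ => (mem_setCompositions.1 hγ).map_image_map_image hψφ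
  · exact fun δ hδ => (mem_setCompositions.1 hδ).map_image_map_image hφψ

lemma stdP_subColl_stdP_subColl (h : IsPartition A) (hK : K ⊆ seg A.card) {g : Finset ℕ}
    (hg : g ⊆ K) :
    stdP (subColl (stdP (subColl A K)) (g.image (stdFun K))) = stdP (subColl A g) := by
  set P := subColl A K with hP_def
  have hP : IsPartition P := h.subColl hK
  have hgP : subColl A g ⊆ P := Finset.image_subset_image hg
  have hmap : subColl (stdP P) (g.image (stdFun K)) = mapB (stdFun (ground P)) (subColl A g) := by
    simp only [subColl, mapB, Finset.image_image]
    refine Finset.image_congr fun j hj => ?_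
    have hjK := hg hj
    simp only [Function.comp_apply]
    rw [blockAt_stdP hP (card_subColl h hK ▸ stdFun_mem_seg hjK), hP_def,
      blockAt_subColl h hK hjK]
  rw [hmap, stdP_mapB ((stdFun_strictMonoOn _).mono (Finset.coe_subset.2
    (ground_subset_ground hgP)))]

lemma applyComp_map_image_stdFun (h : IsPartition A) (hK : K ⊆ seg A.card)
    (hγ : ∀ g ∈ γ, g ⊆ K) :
    applyComp (γ.map (·.image (stdFun K))) (stdP (subColl A K)) = applyComp γ A := by
  simp only [applyComp, List.map_map]
  congr 1
  exact List.map_congr_left fun g hg => stdP_subColl_stdP_subColl h hK (hγ g hg)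

end Relabel

section Antipode

open TensorProduct

variable {A : Blocks}

lemma SmapB_eq_sum (A : Blocks) :
    SmapB A =
      ∑ γ ∈ setCompositions (seg A.card), (-1 : ℚ) ^ γ.length • bas (applyComp γ A) :=
  finsum_mem_eq_finite_toFinset_sum _ _

lemma SmapB_stdP_subColl (h : IsPartition A) {K : Finset ℕ} (hK : K ⊆ seg A.card) :
    SmapB (stdP (subColl A K)) =
      ∑ γ ∈ setCompositions K, (-1 : ℚ) ^ γ.length • bas (applyComp γ A) := by
  rw [SmapB_eq_sum, card_stdP (h.subColl hK), card_subColl h hK, ← image_stdFun K,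
    sum_setCompositions_image (stdFun_strictMonoOn K).injOn]
  refine Finset.sum_congr rfl fun γ hγ => ?_
  rw [List.length_map,
    applyComp_map_image_stdFun h hK fun g hg => (mem_setCompositions.1 hγ).subset hg]

lemma Smap_bas (A : Blocks) : Smap (bas A) = SmapB A := by
  rw [Smap, bas, Finsupp.lsum_single, LinearMap.toSpanSingleton_apply, one_smul]

lemma Delta_bas (A : Blocks) : Delta (bas A) = deltaB A := by
  rw [Delta, bas, Finsupp.lsum_single, LinearMap.toSpanSingleton_apply, one_smul]

lemma mLin_bas_tmul_bas (A B : Blocks) : mLin (bas A ⊗ₜ bas B) = bas (concatP A B) := by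
  rw [mLin, lift.tmul, mulLin, bas, Finsupp.lsum_single, LinearMap.toSpanSingleton_apply,
    one_smul, bas, Finsupp.lsum_single, LinearMap.toSpanSingleton_apply, one_smul]

lemma etaLin_epsLin_bas (A : Blocks) :
    etaLin (epsLin (bas A)) = if A = ∅ then bas ∅ else 0 := by
  split_ifs with hA <;>
    simp [epsLin, etaLin, bas, Finsupp.lsum_single, hA]

lemma mLin_map_Smap_id_Delta_bas (h : IsPartition A) :
    mLin (map Smap LinearMap.id (Delta (bas A))) =
      ∑ K ∈ (seg A.card).powerset, ∑ δ ∈ setCompositions K,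
        (-1 : ℚ) ^ δ.length • bas (applyComp (δ ++ [seg A.card \ K]) A) := by
  rw [Delta_bas, deltaB, map_sum, map_sum]
  refine Finset.sum_congr rfl fun K hK => ?_
  rw [map_tmul, LinearMap.id_apply, Smap_bas, SmapB_stdP_subColl h (Finset.mem_powerset.1 hK),
    sum_tmul, map_sum]
  refine Finset.sum_congr rfl fun δ _ => ?_
  rw [← smul_tmul', map_smul, mLin_bas_tmul_bas, applyComp_append, applyComp_singleton]

lemma mLin_map_id_Smap_Delta_bas (h : IsPartition A) :
    mLin (map LinearMap.id Smap (Delta (bas A))) =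
      ∑ K ∈ (seg A.card).powerset, ∑ δ ∈ setCompositions (seg A.card \ K),
        (-1 : ℚ) ^ δ.length • bas (applyComp (K :: δ) A) := by
  rw [Delta_bas, deltaB, map_sum, map_sum]
  refine Finset.sum_congr rfl fun K _ => ?_
  rw [map_tmul, LinearMap.id_apply, Smap_bas, SmapB_stdP_subColl h Finset.sdiff_subset,
    tmul_sum, map_sum]
  refine Finset.sum_congr rfl fun δ _ => ?_
  rw [tmul_smul, map_smul, mLin_bas_tmul_bas, applyComp_cons]

end Antipode

/-- The map `S(A) = ∑_{γ ∈ Γ(r)} (-1)^{ℓ(γ)} γ[A]` is the antipode of `NCSym`: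
`m ∘ (S ⊗ id) ∘ Δ = η ∘ ε = m ∘ (id ⊗ S) ∘ Δ` on (the span of) the set partitions. -/
theorem ncsym_antipode (n : ℕ) (A : Blocks) (hA : IsSP A n) :
    mLin ((TensorProduct.map Smap LinearMap.id) (Delta (bas A))) = etaLin (epsLin (bas A)) ∧
    mLin ((TensorProduct.map LinearMap.id Smap) (Delta (bas A))) = etaLin (epsLin (bas A)) := by
  have hseg : seg A.card = ∅ ↔ A = ∅ := by rw [seg_eq_empty_iff, Finset.card_eq_zero]
  constructor
  · rw [mLin_map_Smap_id_Delta_bas hA.isPartition, sum_powerset_sum_setCompositions_append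
      (seg A.card) (fun γ => bas (applyComp γ A)) fun δ => by rw [applyComp_append_empty],
      etaLin_epsLin_bas]
    simp only [hseg, applyComp_nil]
  · rw [mLin_map_id_Smap_Delta_bas hA.isPartition, sum_powerset_sum_cons_setCompositions
      (seg A.card) (fun γ => bas (applyComp γ A)) fun δ => by rw [applyComp_empty_cons],
      etaLin_epsLin_bas]
    simp only [hseg, applyComp_nil]
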